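/- Let ≺ be a reflection order on Φ⁺, write Φ⁺ = {β₁ ≺ ⋯ ≺ β_N}, let 0 ≤ n ≤ N, and set u = s_{β_{n+1}} s_{β_{n+2}} ⋯ s_{β_N} ∈ W. Then {β ∈ Φ⁺ : u⁻¹β ∈ Φ⁻} = {β_{n+1}, …, β_N}. -/

import Mathlib

noncomputable section

open Module

variable {V : Type} [AddCommGroup V] [Module ℝ V] [DecidableEq V]

/-- A finite crystallographic root system in `V`, together with a choice of positive roots. -/
structure RootSystemData (V : Type) [AddCommGroup V] [Module ℝ V] where
  /-- the (finite) set of roots -/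
  Φ : Finset V
  /-- the set of positive roots -/
  pos : Finset V
  /-- the coroot `α∨`, viewed as a linear functional on `V` (only its values on `Φ` matter) -/
  coroot : V → Module.Dual ℝ V
  /-- the integer-valued pairing `⟨α∨, β⟩` (crystallographic condition) -/
  pairing : V → V → ℤ
  /-- the reflection `s_α` (only its values for `α ∈ Φ` matter) -/
  s : V → V ≃ₗ[ℝ] V
  span_eq : Submodule.span ℝ (Φ : Set V) = ⊤
  ne_zero : ∀ α ∈ Φ, α ≠ (0 : V)
  neg_mem : ∀ α ∈ Φ, -α ∈ Φ
  coroot_self : ∀ α ∈ Φ, coroot α α = 2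
  pairing_eq : ∀ α ∈ Φ, ∀ β ∈ Φ, (pairing α β : ℝ) = coroot α β
  s_apply : ∀ α ∈ Φ, ∀ v : V, s α v = v - coroot α v • α
  s_root_mem : ∀ α ∈ Φ, ∀ β ∈ Φ, s α β ∈ Φ
  pos_subset : pos ⊆ Φ
  mem_pos_or : ∀ α ∈ Φ, α ∈ pos ∨ -α ∈ pos
  pos_not_neg : ∀ α ∈ pos, -α ∉ pos
  pos_add_mem : ∀ α ∈ pos, ∀ β ∈ pos, α + β ∈ Φ → α + β ∈ pos

namespace RootSystemData

variable (R : RootSystemData V)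

/-- The Weyl group `W`, realized as a subgroup of the linear automorphisms of `V`,
generated by the reflections in the roots. -/
def Wgrp : Subgroup (V ≃ₗ[ℝ] V) := Subgroup.closure ((fun α => R.s α) '' (R.Φ : Set V))

/-- The length function `ℓ(w) = #{α ∈ Φ⁺ : w α ∈ Φ⁻}`. -/
def len (w : V ≃ₗ[ℝ] V) : ℕ := (R.pos.filter fun α => -(w α) ∈ R.pos).card

/-- `⟨α∨, 2ρ⟩ = Σ_{β ∈ Φ⁺} ⟨α∨, β⟩` (an integer). -/
def pairSum (α : V) : ℤ := ∑ β ∈ R.pos, R.pairing α β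

/-- The affine reflection `r_b` (for `b = (γ, ν) ∈ Φ_af`) applied to an affine root `c = (α, k)`:
`r_b (α, k) = (s_γ α, k − ν ⟨γ∨, α⟩)`. -/
def afRefl (b c : V × ℤ) : V × ℤ := (R.s b.1 c.1, c.2 - b.2 * R.pairing b.1 c.1)

/-- Positivity of an affine root `(α, n)`: either `α ∈ Φ⁺` and `n ≥ 0`, or `α ∈ Φ⁻` and `n ≥ 1`. -/
def AfPos (c : V × ℤ) : Prop := (c.1 ∈ R.pos ∧ 0 ≤ c.2) ∨ (-c.1 ∈ R.pos ∧ 1 ≤ c.2)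

/-- The affine reflection `r_b = s_γ t^{ν γ∨}` (for `b = (γ, ν)`), as an element of the
affine Weyl group realized as pairs `(w, μ) ∈ W × (coweights)` representing `w t^μ`. -/
def rE (b : V × ℤ) : (V ≃ₗ[ℝ] V) × Module.Dual ℝ V := (R.s b.1, (b.2 : ℝ) • R.coroot b.1)

end RootSystemData

/-- Multiplication in the affine Weyl group `W̃ = W ⋉ Λ`, where `(w, μ)` represents `w t^μ`:
`(w t^μ)(w' t^{μ'}) = (w w') t^{w'⁻¹ μ + μ'}`, and the contragredient action on coweights is
`w'⁻¹ • μ = μ ∘ w'`. -/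
def amul (x y : (V ≃ₗ[ℝ] V) × Module.Dual ℝ V) : (V ≃ₗ[ℝ] V) × Module.Dual ℝ V :=
  (x.1 * y.1, x.2 ∘ₗ y.1.toLinearMap + y.2)

/-- The ordered product `x₁ x₂ ⋯ x_k` in the affine Weyl group. -/
def aprod (l : List ((V ≃ₗ[ℝ] V) × Module.Dual ℝ V)) : (V ≃ₗ[ℝ] V) × Module.Dual ℝ V :=
  l.foldr amul (1, 0)

namespace RootSystemData

variable (R : RootSystemData V)

/-- Given affine roots `b 0, …, b (K-1)`, this is `r_{b_{K-1}} ⋯ r_{b_{h+1}} r_{b_h} (b h)`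
(apply the reflections with indices `≥ h` in ascending order of application). -/
def twist {K : ℕ} (b : Fin K → V × ℤ) (h : Fin K) : V × ℤ :=
  (((List.finRange K).filter fun j => h ≤ j).foldl (fun c j => R.afRefl (b j) c) (b h))

/-- Given affine roots `b 0, …, b (K-1)`, this is `r_{b_{K-1}} ⋯ r_{b_{h+1}} (b h)`
(apply the reflections with indices `> h` in ascending order of application). -/
def twistStrict {K : ℕ} (b : Fin K → V × ℤ) (h : Fin K) : V × ℤ :=
  (((List.finRange K).filter fun j => h < j).foldl (fun c j => R.afRefl (b j) c) (b h))

end RootSystemData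

/-- A reflection order on `Φ⁺`, given by an enumeration `β 0 ≺ β 1 ≺ ⋯ ≺ β (N-1)` of the
positive roots such that whenever `β i + β j = β k` one has `i < k < j` or `j < k < i`. -/
structure ReflectionOrder (R : RootSystemData V) (N : ℕ) where
  β : Fin N → V
  inj : Function.Injective β
  range_eq : Set.range β = (R.pos : Set V)
  order3 : ∀ i j k : Fin N, β i + β j = β k → (i < k ∧ k < j) ∨ (j < k ∧ k < i)

/-- An increasing labelled path in the double Bruhat graph `DBG(W)` from `u` to `v`:
a sequence of edges `u = u₁ → u₂ → ⋯ → u_{ℓ+1} = v`, whose labels are positive roots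
`lab (ix 1), …, lab (ix ℓ)` with `ix` strictly monotone (so the path is increasing for the
order given by the enumeration `lab`) and all indices lying in the allowed set `S`;
the edge from `u_i` carries an integer `m i ≥ 0`, with `m i ≥ 1` if `u_i (α_i) ∈ Φ⁻`. -/
structure IncPath (R : RootSystemData V) {N : ℕ} (lab : Fin N → V) (S : Set (Fin N))
    (u v : V ≃ₗ[ℝ] V) where
  len : ℕ
  ix : Fin len → Fin N
  mono : StrictMono ix
  mem_S : ∀ i, ix i ∈ S
  m : Fin len → ℤ
  vert : Fin (len + 1) → V ≃ₗ[ℝ] V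
  vert_zero : vert 0 = u
  vert_last : vert (Fin.last len) = v
  lab_mem : ∀ i : Fin len, lab (ix i) ∈ R.pos
  step : ∀ i : Fin len, vert i.succ = vert i.castSucc * R.s (lab (ix i))
  m_lb : ∀ i : Fin len, (if vert i.castSucc (lab (ix i)) ∈ R.pos then (0 : ℤ) else 1) ≤ m i

/-- The weight `wt(p) = m₁ α₁∨ + ⋯ + m_ℓ α_ℓ∨` of a path, as a coweight. -/
def IncPath.wt {R : RootSystemData V} {N : ℕ} {lab : Fin N → V} {S : Set (Fin N)}
    {u v : V ≃ₗ[ℝ] V} (p : IncPath R lab S u v) : Module.Dual ℝ V :=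
  ∑ i : Fin p.len, (p.m i : ℝ) • R.coroot (lab (p.ix i))

/-- A path in the quantum Bruhat graph `QBG(W)` from `u` to `v`: every edge is either an
edge `w →^{(α,0)} w s_α` with `ℓ(w s_α) = ℓ(w) + 1`, or an edge `w →^{(α,1)} w s_α` with
`ℓ(w s_α) = ℓ(w) + 1 − ⟨α∨, 2ρ⟩`. -/
structure QPath (R : RootSystemData V) (u v : V ≃ₗ[ℝ] V) where
  len : ℕ
  lab : Fin len → V
  lab_mem : ∀ i, lab i ∈ R.pos
  m : Fin len → ℤ
  vert : Fin (len + 1) → V ≃ₗ[ℝ] V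
  vert_zero : vert 0 = u
  vert_last : vert (Fin.last len) = v
  step : ∀ i : Fin len, vert i.succ = vert i.castSucc * R.s (lab i)
  edge : ∀ i : Fin len,
    (m i = 0 ∧ R.len (vert i.succ) = R.len (vert i.castSucc) + 1) ∨
    (m i = 1 ∧ (R.len (vert i.succ) : ℤ) = (R.len (vert i.castSucc) : ℤ) + 1 - R.pairSum (lab i))

/-- The weight of a path in the quantum Bruhat graph. -/
def QPath.wt {R : RootSystemData V} {u v : V ≃ₗ[ℝ] V} (q : QPath R u v) : Module.Dual ℝ V :=
  ∑ i : Fin q.len, (q.m i : ℝ) • R.coroot (q.lab i)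

/-- A simple root: a positive root that is not the sum of two positive roots. -/
def IsSimpleRoot (R : RootSystemData V) (α : V) : Prop :=
  α ∈ R.pos ∧ ¬ ∃ β ∈ R.pos, ∃ γ ∈ R.pos, α = β + γ

/-- `l` is a reduced word for `w`: a list of simple roots whose reflections multiply to `w`,
of length `ℓ(w)`. -/
def IsReducedWord (R : RootSystemData V) (l : List V) (w : V ≃ₗ[ℝ] V) : Prop :=
  (∀ a ∈ l, IsSimpleRoot R a) ∧ (l.map R.s).prod = w ∧ l.length = R.len w

/-- Bruhat order: `x ≤ y` iff some reduced word for `y` contains a subword which is a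
reduced word for `x`. -/
def BruhatLE (R : RootSystemData V) (x y : V ≃ₗ[ℝ] V) : Prop :=
  ∃ ly : List V, IsReducedWord R ly y ∧ ∃ lx : List V, lx.Sublist ly ∧ IsReducedWord R lx x

/-- An admissible type for `(x, u, ≺)`, bounded by `n`: indices `n₁ < ⋯ < n_K ≤ n` and
integers `ν₁, …, ν_K` such that, with `b_h = (u β_{n_h}, ν_h)`, each
`r_{b_K} ⋯ r_{b_{h+1}} (b_h)` is a negative affine root and `r_{b₁} ⋯ r_{b_K} = x` in `W̃`. -/
structure AdmissibleType (R : RootSystemData V) {N : ℕ} (RO : ReflectionOrder R N) (n : ℕ)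
    (u : V ≃ₗ[ℝ] V) (x : (V ≃ₗ[ℝ] V) × Module.Dual ℝ V) where
  K : ℕ
  idx : Fin K → Fin N
  mono : StrictMono idx
  bounded : ∀ h, (idx h : ℕ) < n
  ν : Fin K → ℤ
  neg_cond : ∀ h : Fin K, ¬ R.AfPos (R.twistStrict (fun j => (u (RO.β (idx j)), ν j)) h)
  prod_eq : aprod (List.ofFn fun h : Fin K => R.rE (u (RO.β (idx h)), ν h)) = x



/-!
Write `u_n = s_{β n} ⋯ s_{β (N-1)}`. By downward induction on `n`, `u_n Φ⁺` is the positive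
system `Φ_n` made of the `β i` with `i < n` and the `-β i` with `i ≥ n`. As
`u_n = s_{β n} u_{n+1}`, the inductive step says that `s_{β n}` swaps `±β n` and permutes the rest
of `Φ_{n+1}`. The reflection order axiom makes `β n` indecomposable in `Φ_{n+1}`, and a reflection
in an indecomposable element of a positive system permutes its other elements, by walking along
root strings: `⟨α∨, γ⟩ > 0` forces `γ - α ∈ Φ`, since otherwise `⟨α∨, γ⟩⟨γ∨, α⟩ ∉ {1, 2, 3}` and
the `s_γ s_α`-orbit of `γ` would be infinite.
-/

lemma strictMono_abs_of_recurrence {t : ℤ} (ht : 2 ≤ |t|) {a : ℕ → ℤ} (h₀ : a 0 = 0)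
    (h₁ : a 1 ≠ 0) (hrec : ∀ n, a (n + 2) = t * a (n + 1) - a n) :
    StrictMono fun n => |a n| := by
  refine strictMono_nat_of_lt_succ fun n => ?_
  induction n with
  | zero => simpa [h₀] using h₁
  | succ n ih =>
    have h := abs_sub_abs_le_abs_sub (t * a (n + 1)) (a n)
    rw [← hrec, abs_mul] at h
    nlinarith [abs_nonneg (a (n + 1))]

/-- The matrix of `s_γ s_α` in the basis `(α, γ)`, where `p = ⟨α∨, γ⟩` and `q = ⟨γ∨, α⟩`. -/
def dihedralStep (p q : ℤ) (c : ℤ × ℤ) : ℤ × ℤ :=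
  (-c.1 - p * c.2, q * c.1 + (p * q - 1) * c.2)

lemma dihedralStep_iterate_fst (p q : ℤ) (c : ℤ × ℤ) (n : ℕ) :
    ((dihedralStep p q)^[n + 2] c).1 =
      (p * q - 2) * ((dihedralStep p q)^[n + 1] c).1 - ((dihedralStep p q)^[n] c).1 := by
  rw [Function.iterate_succ_apply', Function.iterate_succ_apply']
  simp only [dihedralStep]
  ring

namespace RootSystemData

section

omit [DecidableEq V]

variable {R : RootSystemData V} {α γ x : V}

lemma s_apply_self (hα : α ∈ R.Φ) : R.s α α = -α := by
  rw [R.s_apply α hα, R.coroot_self α hα]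
  module

lemma s_apply_s_apply (hα : α ∈ R.Φ) (v : V) : R.s α (R.s α v) = v := by
  rw [R.s_apply α hα v, R.s_apply α hα, map_sub, map_smul, R.coroot_self α hα]
  module

lemma s_inv (hα : α ∈ R.Φ) : (R.s α)⁻¹ = R.s α :=
  inv_eq_of_mul_eq_one_left <| LinearEquiv.ext (s_apply_s_apply hα)

lemma s_apply_of_mem (hα : α ∈ R.Φ) (hx : x ∈ R.Φ) :
    R.s α x = x - (R.pairing α x : ℝ) • α := by
  rw [R.s_apply α hα, R.pairing_eq α hα x hx]

lemma pairing_neg (hα : α ∈ R.Φ) (hx : x ∈ R.Φ) : R.pairing α (-x) = -R.pairing α x := by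
  have h := R.pairing_eq α hα (-x) (R.neg_mem x hx)
  rw [map_neg, ← R.pairing_eq α hα x hx] at h
  exact_mod_cast h

lemma pairing_add_self (hα : α ∈ R.Φ) (hx : x ∈ R.Φ) (hxα : x + α ∈ R.Φ) :
    R.pairing α (x + α) = R.pairing α x + 2 := by
  have h := R.pairing_eq α hα _ hxα
  rw [map_add, R.coroot_self α hα, ← R.pairing_eq α hα x hx] at h
  exact_mod_cast h

lemma pairing_sub_self (hα : α ∈ R.Φ) (hx : x ∈ R.Φ) (hxα : x - α ∈ R.Φ) :
    R.pairing α (x - α) = R.pairing α x - 2 := by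
  have h := R.pairing_eq α hα _ hxα
  rw [map_sub, R.coroot_self α hα, ← R.pairing_eq α hα x hx] at h
  exact_mod_cast h

variable (R) in
def IsReduced : Prop := ∀ α ∈ R.Φ, (2 : ℝ) • α ∉ R.Φ

lemma IsReduced.linearIndependent (hR : R.IsReduced) (hα : α ∈ R.Φ) (hγ : γ ∈ R.Φ)
    (h₁ : γ ≠ α) (h₂ : γ ≠ -α) : LinearIndependent ℝ ![α, γ] := by
  rw [LinearIndependent.pair_iff' (R.ne_zero α hα)]
  rintro c rfl
  -- `⟨α∨, cα⟩ = 2c` and `⟨(cα)∨, α⟩ = 2/c` are integers, so `c ∈ {±1/2, ±1, ±2}`.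
  set p := R.pairing α (c • α)
  set q := R.pairing (c • α) α
  have hp : (p : ℝ) = 2 * c := by
    rw [R.pairing_eq α hα _ hγ, map_smul, R.coroot_self α hα, smul_eq_mul, mul_comm]
  have hq : (q : ℝ) * c = 2 := by
    have h := R.coroot_self _ hγ
    rwa [map_smul, smul_eq_mul, ← R.pairing_eq _ hγ α hα, mul_comm] at h
  have hpq : p * q = 4 := by
    have : (p : ℝ) * q = 4 := by rw [hp]; linear_combination 2 * hq
    exact_mod_cast this
  have hdvd : p ∣ 4 := ⟨q, hpq.symm⟩
  have hc : c = p / 2 := by linarith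
  have hcases : p = -4 ∨ p = -2 ∨ p = -1 ∨ p = 1 ∨ p = 2 ∨ p = 4 := by
    have h₁ := Int.le_of_dvd (by norm_num) hdvd
    have h₂ : -4 ≤ p := neg_le.mp (Int.le_of_dvd (by norm_num) (neg_dvd.mpr hdvd))
    interval_cases p <;> omega
  rcases hcases with h | h | h | h | h | h <;> rw [h] at hc <;> norm_num at hc <;> subst hc
  · exact hR (-α) (R.neg_mem α hα) (by convert hγ using 1; module)
  · exact h₂ (by module)
  · exact hR _ hγ (by convert R.neg_mem α hα using 1; module)
  · exact hR _ hγ (by convert hα using 1; module)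
  · exact h₁ (by module)
  · exact hR α hα hγ

lemma s_comp_s_iterate (hα : α ∈ R.Φ) (hγ : γ ∈ R.Φ) (n : ℕ) (c : ℤ × ℤ) :
    (R.s γ ∘ R.s α)^[n] ((c.1 : ℝ) • α + (c.2 : ℝ) • γ) =
      (((dihedralStep (R.pairing α γ) (R.pairing γ α))^[n] c).1 : ℝ) • α +
        (((dihedralStep (R.pairing α γ) (R.pairing γ α))^[n] c).2 : ℝ) • γ := by
  induction n generalizing c with
  | zero => rfl
  | succ n ih =>
    rw [Function.iterate_succ_apply, Function.iterate_succ_apply, ← ih]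
    congr 1
    simp only [Function.comp_apply, dihedralStep, R.s_apply α hα, R.s_apply γ hγ, map_add,
      map_sub, map_smul, R.coroot_self α hα, R.coroot_self γ hγ, ← R.pairing_eq α hα γ hγ,
      ← R.pairing_eq γ hγ α hα, smul_eq_mul]
    push_cast
    module

theorem pairing_mul_pairing_pos_and_lt_four (hα : α ∈ R.Φ) (hγ : γ ∈ R.Φ)
    (hind : LinearIndependent ℝ ![α, γ]) (hp : R.pairing α γ ≠ 0) :
    0 < R.pairing α γ * R.pairing γ α ∧ R.pairing α γ * R.pairing γ α < 4 := by
  set step := dihedralStep (R.pairing α γ) (R.pairing γ α)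
  by_contra hpq
  have ht : 2 ≤ |R.pairing α γ * R.pairing γ α - 2| := by
    rw [le_abs']
    omega
  -- the `α`-coordinates along the `s_γ s_α`-orbit of `γ` grow, so the orbit is infinite
  have hmono := strictMono_abs_of_recurrence ht (a := fun n => (step^[n] (0, 1)).1) rfl
    (by simpa [step, dihedralStep] using hp) (dihedralStep_iterate_fst _ _ _)
  have horbit (n : ℕ) : (R.s γ ∘ R.s α)^[n] γ =
      ((step^[n] (0, 1)).1 : ℝ) • α + ((step^[n] (0, 1)).2 : ℝ) • γ := by
    simpa using s_comp_s_iterate hα hγ n (0, 1)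
  have hinj : Function.Injective fun n => (R.s γ ∘ R.s α)^[n] γ := by
    intro m n hmn
    simp only [horbit] at hmn
    have hdiff : (((step^[m] (0, 1)).1 : ℝ) - (step^[n] (0, 1)).1) • α +
        (((step^[m] (0, 1)).2 : ℝ) - (step^[n] (0, 1)).2) • γ = 0 := by
      rw [sub_smul, sub_smul, sub_add_sub_comm, hmn, sub_self]
    have hfst := sub_eq_zero.mp (LinearIndependent.pair_iff.mp hind _ _ hdiff).1
    exact hmono.injective (congrArg abs (Int.cast_injective hfst))
  refine R.Φ.finite_toSet.not_infinite (Set.infinite_of_injective_forall_mem hinj fun n => ?_)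
  exact Set.MapsTo.iterate (fun v hv => R.s_root_mem γ hγ _ (R.s_root_mem α hα v hv)) n hγ

theorem sub_mem_of_pairing_pos (hα : α ∈ R.Φ) (hγ : γ ∈ R.Φ)
    (hind : LinearIndependent ℝ ![α, γ]) (hp : 0 < R.pairing α γ) : γ - α ∈ R.Φ := by
  obtain ⟨hpos, hlt⟩ := pairing_mul_pairing_pos_and_lt_four hα hγ hind hp.ne'
  have hq : 0 < R.pairing γ α := pos_of_mul_pos_right hpos hp.le
  have hone : R.pairing α γ = 1 ∨ R.pairing γ α = 1 := by
    by_contra! h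
    nlinarith [show 2 ≤ R.pairing α γ by omega, show 2 ≤ R.pairing γ α by omega]
  rcases hone with h | h
  · simpa [s_apply_of_mem hα hγ, h] using R.s_root_mem α hα γ hγ
  · simpa [s_apply_of_mem hγ hα, h] using R.neg_mem _ (R.s_root_mem γ hγ α hα)

variable (R) in
def AddClosed (S : Set V) : Prop := ∀ x ∈ S, ∀ y ∈ S, x + y ∈ R.Φ → x + y ∈ S

variable (R) in
structure IsPositiveSystem (P : Set V) : Prop where
  subset : P ⊆ R.Φ
  mem_or_neg_mem : ∀ x ∈ R.Φ, x ∈ P ∨ -x ∈ P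
  neg_not_mem : ∀ x ∈ P, -x ∉ P
  add_add_ne_zero : ∀ x ∈ P, ∀ y ∈ P, ∀ z ∈ P, x + y + z ≠ 0

variable {P A B : Set V}

lemma IsPositiveSystem.addClosed (hP : R.IsPositiveSystem P) : R.AddClosed P := by
  intro x hx y hy hxy
  refine (hP.mem_or_neg_mem _ hxy).resolve_right fun h => hP.add_add_ne_zero x hx y hy _ h ?_
  abel

lemma isPositiveSystem_pos : R.IsPositiveSystem R.pos where
  subset := R.pos_subset
  mem_or_neg_mem := R.mem_pos_or
  neg_not_mem := R.pos_not_neg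
  add_add_ne_zero x hx y hy z hz hsum := by
    have hxy : x + y = -z := eq_neg_of_add_eq_zero_left hsum
    exact R.pos_not_neg z hz (hxy ▸ R.pos_add_mem x hx y hy (hxy ▸ R.neg_mem z (R.pos_subset hz)))

theorem IsPositiveSystem.union_neg (hP : R.IsPositiveSystem (A ∪ B)) (hAB : Disjoint A B)
    (hA : R.AddClosed A) (hB : R.AddClosed B) : R.IsPositiveSystem (A ∪ -B) where
  subset := by
    rintro x (hx | hx)
    · exact hP.subset (Or.inl hx)
    · simpa using R.neg_mem _ (hP.subset (Or.inr hx))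
  mem_or_neg_mem x hx := by
    rcases hP.mem_or_neg_mem x hx with (h | h) | (h | h)
    · exact Or.inl (Or.inl h)
    · exact Or.inr (Or.inr (by simpa using h))
    · exact Or.inr (Or.inl h)
    · exact Or.inl (Or.inr h)
  neg_not_mem := by
    rintro x (hx | hx) (hx' | hx')
    · exact hP.neg_not_mem x (Or.inl hx) (Or.inl hx')
    · exact hAB.ne_of_mem hx (by simpa using hx') rfl
    · exact hAB.ne_of_mem hx' hx rfl
    · exact hP.neg_not_mem _ (Or.inr hx) (Or.inr (by simpa using hx'))
  add_add_ne_zero := by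
    have twoA : ∀ x ∈ A, ∀ y ∈ A, ∀ z, -z ∈ B → x + y + z ≠ 0 := by
      intro x hx y hy z hz hsum
      have hxy : x + y = -z := eq_neg_of_add_eq_zero_left hsum
      refine hAB.ne_of_mem (hA x hx y hy ?_) hz hxy
      exact hxy ▸ hP.subset (Or.inr hz)
    have twoB : ∀ x, -x ∈ B → ∀ y, -y ∈ B → ∀ z ∈ A, x + y + z ≠ 0 := by
      intro x hx y hy z hz hsum
      have hxy : -x + -y = z := by rw [← neg_add, eq_neg_of_add_eq_zero_left hsum, neg_neg]
      refine hAB.ne_of_mem hz (hB _ hx _ hy ?_) hxy.symm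
      exact hxy ▸ hP.subset (Or.inl hz)
    rintro x (hx | hx) y (hy | hy) z (hz | hz) hsum
    · exact hP.add_add_ne_zero x (Or.inl hx) y (Or.inl hy) z (Or.inl hz) hsum
    · exact twoA x hx y hy z hz hsum
    · exact twoA x hx z hz y hy (by rw [← hsum]; abel)
    · exact twoB y hy z hz x hx (by rw [← hsum]; abel)
    · exact twoA y hy z hz x hx (by rw [← hsum]; abel)
    · exact twoB x hx z hz y hy (by rw [← hsum]; abel)
    · exact twoB x hx y hy z hz hsum
    · exact hP.add_add_ne_zero _ (Or.inr hx) _ (Or.inr hy) _ (Or.inr hz)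
        (by rw [← neg_add, ← neg_add, hsum, neg_zero])

section Reflection

variable (hR : R.IsReduced) (hP : R.IsPositiveSystem P) (hαP : α ∈ P)
  (hindec : ∀ x ∈ P, ∀ y ∈ P, x + y ≠ α)
include hR hP hαP

lemma IsPositiveSystem.linearIndependent (hx : x ∈ P) (hxα : x ≠ α) :
    LinearIndependent ℝ ![α, x] :=
  hR.linearIndependent (hP.subset hαP) (hP.subset hx) hxα
    fun h => hP.neg_not_mem α hαP (h ▸ hx)

lemma IsPositiveSystem.add_mem_of_pairing_neg (hx : x ∈ P) (hxα : x ≠ α)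
    (hm : R.pairing α x < 0) : x + α ∈ P := by
  have hαΦ := hP.subset hαP
  have hxΦ := hP.subset hx
  have hsub := RootSystemData.sub_mem_of_pairing_pos hαΦ (R.neg_mem x hxΦ)
    (LinearIndependent.pair_neg_right_iff.mpr (hP.linearIndependent hR hαP hx hxα))
    (by rw [pairing_neg hαΦ hxΦ]; omega)
  refine hP.addClosed x hx α hαP ?_
  simpa [neg_sub_left, add_comm] using R.neg_mem _ hsub

include hindec in
lemma IsPositiveSystem.sub_mem_of_pairing_pos (hx : x ∈ P) (hxα : x ≠ α)
    (hm : 0 < R.pairing α x) : x - α ∈ P := by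
  have hsub := RootSystemData.sub_mem_of_pairing_pos (hP.subset hαP) (hP.subset hx)
    (hP.linearIndependent hR hαP hx hxα) hm
  refine (hP.mem_or_neg_mem _ hsub).resolve_right fun h => hindec _ h x hx ?_
  abel

include hindec in
theorem IsPositiveSystem.s_mem (hx : x ∈ P) (hxα : x ≠ α) : R.s α x ∈ P := by
  have hαΦ := hP.subset hαP
  induction hk : (R.pairing α x).natAbs using Nat.strong_induction_on generalizing x with
  | _ k ih =>
    have hxΦ := hP.subset hx
    rcases lt_trichotomy (R.pairing α x) 0 with hm | hm | hm
    · have hxα' := hP.add_mem_of_pairing_neg hR hαP hx hxα hm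
      have hpair := pairing_add_self hαΦ hxΦ (hP.subset hxα')
      by_cases hm1 : R.pairing α x = -1
      · simpa [s_apply_of_mem hαΦ hxΦ, hm1] using hxα'
      have hne : x + α ≠ α := fun h => R.ne_zero x hxΦ (add_eq_right.mp h)
      have hs := ih _ (by omega) hxα' hne rfl
      rw [map_add, s_apply_self hαΦ] at hs
      simpa using hP.addClosed _ hs α hαP (by simpa using R.s_root_mem α hαΦ x hxΦ)
    · simpa [s_apply_of_mem hαΦ hxΦ, hm] using hx
    · have hxα' := hP.sub_mem_of_pairing_pos hR hαP hindec hx hxα hm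
      have hpair := pairing_sub_self hαΦ hxΦ (hP.subset hxα')
      by_cases hm1 : R.pairing α x = 1
      · simpa [s_apply_of_mem hαΦ hxΦ, hm1] using hxα'
      have hne : x - α ≠ α := fun h => hR α hαΦ (by rwa [two_smul, ← eq_add_of_sub_eq h])
      have hs := ih _ (by omega) hxα' hne rfl
      rw [map_sub, s_apply_self hαΦ, sub_neg_eq_add] at hs
      refine (hP.mem_or_neg_mem _ (R.s_root_mem α hαΦ x hxΦ)).resolve_right
        fun h => hindec _ hs _ h ?_
      abel

include hindec in
theorem IsPositiveSystem.s_mem_iff (hxα : x ≠ α) (hxα' : x ≠ -α) : R.s α x ∈ P ↔ x ∈ P := by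
  have hαΦ := hP.subset hαP
  refine ⟨fun h => ?_, (hP.s_mem hR hαP hindec · hxα)⟩
  have hne : R.s α x ≠ α := fun h' => hxα' (by rw [← s_apply_s_apply hαΦ x, h', s_apply_self hαΦ])
  simpa [s_apply_s_apply hαΦ] using hP.s_mem hR hαP hindec h hne

end Reflection

end

end RootSystemData

namespace ReflectionOrder

open RootSystemData

section

omit [DecidableEq V]

variable {R : RootSystemData V} {N : ℕ} (RO : ReflectionOrder R N) {x : V}

lemma β_mem_pos (i : Fin N) : RO.β i ∈ R.pos := by
  rw [← Finset.mem_coe, ← RO.range_eq]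
  exact Set.mem_range_self i

lemma exists_β_eq (hx : x ∈ R.pos) : ∃ i, RO.β i = x := by
  rw [← Finset.mem_coe, ← RO.range_eq] at hx
  exact hx

include RO in
lemma isReduced : R.IsReduced := by
  have hpos : ∀ α ∈ R.pos, (2 : ℝ) • α ∉ R.Φ := by
    intro α hα h2α
    rcases R.mem_pos_or _ h2α with h | h
    · obtain ⟨i, rfl⟩ := RO.exists_β_eq hα
      obtain ⟨k, hk⟩ := RO.exists_β_eq h
      rcases RO.order3 i i k (by rw [hk, two_smul]) with h' | h' <;>
        exact lt_irrefl _ (h'.1.trans h'.2)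
    · have hsum : α + -((2 : ℝ) • α) = -α := by module
      exact R.pos_not_neg α hα
        (hsum ▸ R.pos_add_mem α hα _ h (hsum ▸ R.neg_mem α (R.pos_subset hα)))
  intro α hα h2α
  rcases R.mem_pos_or α hα with h | h
  · exact hpos α h h2α
  · exact hpos (-α) h (by rw [smul_neg]; exact R.neg_mem _ h2α)

lemma addClosed_image {S : Set (Fin N)} (hS : S.OrdConnected) : R.AddClosed (RO.β '' S) := by
  rintro _ ⟨i, hi, rfl⟩ _ ⟨j, hj, rfl⟩ hij
  obtain ⟨k, hk⟩ := RO.exists_β_eq (R.pos_add_mem _ (RO.β_mem_pos i) _ (RO.β_mem_pos j) hij)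
  refine ⟨k, ?_, hk⟩
  rcases RO.order3 i j k hk.symm with h | h
  · exact hS.out hi hj ⟨h.1.le, h.2.le⟩
  · exact hS.out hj hi ⟨h.1.le, h.2.le⟩

/-- `u Φ⁺` for `u = s_{β c} ⋯ s_{β (N-1)}`, see `inv_prod_drop_mem_pos_iff`. -/
def cutSystem (c : ℕ) : Set V :=
  RO.β '' {i | (i : ℕ) < c} ∪ -(RO.β '' {i | c ≤ (i : ℕ)})

theorem isPositiveSystem_cutSystem (c : ℕ) : R.IsPositiveSystem (RO.cutSystem c) := by
  have hunion : RO.β '' {i | (i : ℕ) < c} ∪ RO.β '' {i | c ≤ (i : ℕ)} = R.pos := by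
    rw [← Set.image_union, ← RO.range_eq, ← Set.image_univ]
    congr 1
    ext i
    simp only [Set.mem_union, Set.mem_ofPred_eq, Set.mem_univ, iff_true]
    omega
  refine IsPositiveSystem.union_neg (hunion ▸ isPositiveSystem_pos) ?_
    (RO.addClosed_image ⟨fun i _ j hj k hk => ?_⟩) (RO.addClosed_image ⟨fun i hi j _ k hk => ?_⟩)
  · rw [Set.disjoint_image_iff RO.inj]
    exact Set.disjoint_left.mpr fun i h₁ h₂ => by simp only [Set.mem_ofPred_eq] at h₁ h₂; omega
  · have := hk.2
    simp only [Set.mem_ofPred_eq] at *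
    omega
  · have := hk.1
    simp only [Set.mem_ofPred_eq] at *
    omega

lemma β_mem_cutSystem_succ (t : Fin N) : RO.β t ∈ RO.cutSystem (t + 1) :=
  Or.inl ⟨t, Nat.lt_succ_self t, rfl⟩

lemma neg_β_mem_cutSystem (t : Fin N) : -RO.β t ∈ RO.cutSystem t :=
  Or.inr ⟨t, le_refl (t : ℕ), (neg_neg _).symm⟩

lemma mem_cutSystem_succ_iff {t : Fin N} (h₁ : x ≠ RO.β t) (h₂ : x ≠ -RO.β t) :
    x ∈ RO.cutSystem (t + 1) ↔ x ∈ RO.cutSystem t := by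
  have hne {i : Fin N} (h : RO.β i = x ∨ RO.β i = -x) : (i : ℕ) ≠ t := fun hi => by
    obtain rfl : i = t := Fin.ext hi
    rcases h with h | h
    · exact h₁ h.symm
    · exact h₂ (by rw [h, neg_neg])
  simp only [cutSystem, Set.mem_union, Set.mem_image, Set.mem_neg, Set.mem_ofPred_eq]
  refine or_congr (exists_congr fun i => ?_) (exists_congr fun i => ?_)
  · exact ⟨fun h => ⟨by have := hne (Or.inl h.2); omega, h.2⟩, fun h => ⟨by omega, h.2⟩⟩
  · exact ⟨fun h => ⟨by omega, h.2⟩, fun h => ⟨by have := hne (Or.inr h.2); omega, h.2⟩⟩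

lemma add_ne_β_of_mem_cutSystem_succ {t : Fin N} {y : V} (hx : x ∈ RO.cutSystem (t + 1))
    (hy : y ∈ RO.cutSystem (t + 1)) : x + y ≠ RO.β t := by
  intro hsum
  have hP := RO.isPositiveSystem_cutSystem
  have hmem {z w : V} (hz : z ∈ RO.cutSystem (t + 1)) (hw : w ∈ RO.cutSystem (t + 1))
      (hzw : z + w = RO.β t) : z ∈ RO.cutSystem t := by
    refine (RO.mem_cutSystem_succ_iff (fun h => ?_) (fun h => ?_)).mp hz
    · exact R.ne_zero w ((hP _).subset hw) (add_eq_left.mp (hzw.trans h.symm))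
    · exact (hP _).neg_not_mem _ (RO.β_mem_cutSystem_succ t) (h ▸ hz)
  refine (hP t).add_add_ne_zero x (hmem hx hy hsum) y (hmem hy hx (by rwa [add_comm])) _
    (RO.neg_β_mem_cutSystem t) ?_
  rw [hsum, add_neg_cancel]

theorem s_β_mem_cutSystem_succ_iff (t : Fin N) :
    R.s (RO.β t) x ∈ RO.cutSystem (t + 1) ↔ x ∈ RO.cutSystem t := by
  have hP := RO.isPositiveSystem_cutSystem
  have hβ : RO.β t ∈ R.Φ := R.pos_subset (RO.β_mem_pos t)
  by_cases h₁ : x = RO.β t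
  · rw [h₁, s_apply_self hβ]
    exact iff_of_false ((hP _).neg_not_mem _ (RO.β_mem_cutSystem_succ t))
      fun h => (hP t).neg_not_mem _ h (RO.neg_β_mem_cutSystem t)
  by_cases h₂ : x = -RO.β t
  · rw [h₂, map_neg, s_apply_self hβ, neg_neg]
    exact iff_of_true (RO.β_mem_cutSystem_succ t) (RO.neg_β_mem_cutSystem t)
  rw [(hP _).s_mem_iff RO.isReduced (RO.β_mem_cutSystem_succ t)
    (fun _ hx _ hy => RO.add_ne_β_of_mem_cutSystem_succ hx hy) h₁ h₂]
  exact RO.mem_cutSystem_succ_iff h₁ h₂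

lemma cutSystem_of_le {c : ℕ} (hc : N ≤ c) : RO.cutSystem c = R.pos := by
  have hlt : {i : Fin N | (i : ℕ) < c} = Set.univ := Set.eq_univ_of_forall fun i => by
    simp only [Set.mem_ofPred_eq]
    omega
  have hge : {i : Fin N | c ≤ (i : ℕ)} = ∅ := Set.eq_empty_of_forall_notMem fun i => by
    simp only [Set.mem_ofPred_eq]
    omega
  rw [cutSystem, hlt, hge, Set.image_univ, RO.range_eq, Set.image_empty, Set.neg_empty,
    Set.union_empty]

lemma neg_mem_cutSystem_iff {c : ℕ} (hx : x ∈ R.pos) :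
    -x ∈ RO.cutSystem c ↔ x ∈ RO.β '' {i | c ≤ (i : ℕ)} := by
  rw [cutSystem, Set.mem_union, Set.mem_neg, neg_neg, or_iff_right]
  rintro ⟨i, -, hi⟩
  exact R.pos_not_neg x hx (hi ▸ RO.β_mem_pos i)

theorem inv_prod_drop_mem_pos_iff (n : ℕ) (hx : x ∈ R.Φ) :
    ((List.ofFn fun i => R.s (RO.β i)).drop n).prod⁻¹ x ∈ R.pos ↔ x ∈ RO.cutSystem n := by
  induction hk : N - n generalizing n x with
  | zero =>
    rw [List.drop_eq_nil_of_le (by simp; omega), RO.cutSystem_of_le (by omega)]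
    rfl
  | succ k ih =>
    have hn : n < N := by omega
    have hβ : RO.β ⟨n, hn⟩ ∈ R.Φ := R.pos_subset (RO.β_mem_pos _)
    rw [List.drop_eq_getElem_cons (by simpa using hn), List.prod_cons, mul_inv_rev,
      List.getElem_ofFn, s_inv hβ, LinearEquiv.mul_apply,
      ih (n + 1) (R.s_root_mem _ hβ x hx) (by omega)]
    exact RO.s_β_mem_cutSystem_succ_iff ⟨n, hn⟩

end

end ReflectionOrder

theorem statement1_general (R : RootSystemData V) {N : ℕ} (RO : ReflectionOrder R N)
    (n : ℕ)
    (u : V ≃ₗ[ℝ] V) (hu : u = ((List.ofFn fun i => R.s (RO.β i)).drop n).prod) :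
    {x : V | x ∈ R.pos ∧ -((u⁻¹ : V ≃ₗ[ℝ] V) x) ∈ R.pos}
      = RO.β '' {i : Fin N | n ≤ (i : ℕ)} := by
  subst hu
  ext x
  by_cases hx : x ∈ R.pos
  · rw [Set.mem_ofPred_eq, ← map_neg,
      RO.inv_prod_drop_mem_pos_iff n (R.neg_mem x (R.pos_subset hx)),
      RO.neg_mem_cutSystem_iff hx, and_iff_right hx]
  · exact iff_of_false (fun h => hx h.1) fun ⟨i, _, hi⟩ => hx (hi ▸ RO.β_mem_pos i)

/-- for a reflection order `β₁ ≺ ⋯ ≺ β_N`, `0 ≤ n ≤ N` and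
`u = s_{β_{n+1}} ⋯ s_{β_N}`, one has `{β ∈ Φ⁺ : u⁻¹ β ∈ Φ⁻} = {β_{n+1}, …, β_N}`. -/
theorem statement1 (R : RootSystemData V) {N : ℕ} (RO : ReflectionOrder R N)
    (n : ℕ) (hn : n ≤ N)
    (u : V ≃ₗ[ℝ] V) (hu : u = ((List.ofFn fun i => R.s (RO.β i)).drop n).prod) :
    {x : V | x ∈ R.pos ∧ -((u⁻¹ : V ≃ₗ[ℝ] V) x) ∈ R.pos}
      = RO.β '' {i : Fin N | n ≤ (i : ℕ)} :=
  statement1_general R RO n u hu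

end
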